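/- arXiv:1711.11516 — 3 statements merged into one kernel-verified Lean document; each statement's English description precedes it below -/
import Mathlib

section
/- Let v : ℝ → ℝ be differentiable with v' ≤ v² − 1 on all of ℝ and −1 < v(t) < 1 for all t. Then v is strictly decreasing, sup v = 1 is approached as t → −∞ (i.e. lim_{t→−∞} v(t) = 1), and lim_{t→+∞} v(t) = −1. -/
/-!
Since `|v| < 1`, the hypothesis gives `v' ≤ v² - 1 < 0`, so `v` is strictly decreasing and its
limit at `-∞` is `L = sup v ≤ 1`. If `L < 1`, then on `(-∞, 0]` the values of `v` stay in
`[v 0, L]`, a compact subinterval of `(-1, 1)`, so `v' ≤ -ε` there for some `ε > 0`;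
then `v(t) ≥ v 0 + ε |t| → ∞`, contradicting `v < 1`. The limit at `+∞` follows by applying
this to `t ↦ -v(-t)`, which satisfies the same hypotheses.
-/

open Filter Set

lemma tendsto_atBot_atTop_of_deriv_le_neg {f : ℝ → ℝ} {a ε : ℝ} (hf : Differentiable ℝ f)
    (hε : 0 < ε) (hf' : ∀ t ≤ a, deriv f t ≤ -ε) : Tendsto f atBot atTop := by
  have mvt : ∀ t ≤ a, f a - f t ≤ -ε * (a - t) := fun t ht =>
    (convex_Iic a).image_sub_le_mul_sub_of_deriv_le hf.continuous.continuousOn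
      hf.differentiableOn (fun x hx => hf' x (interior_subset hx : x ∈ Iic a))
      t ht a (mem_Iic.2 le_rfl) ht
  have linear : Tendsto (fun t => f a + ε * a + ε * -t) atBot atTop :=
    tendsto_atTop_add_const_left _ _
      ((tendsto_const_mul_atTop_of_pos hε).2 tendsto_neg_atBot_atTop)
  refine tendsto_atTop_mono' _ ?_ linear
  filter_upwards [eventually_le_atBot a] with t ht
  linarith [mvt t ht]

section SubRiccati

variable {v : ℝ → ℝ}

lemma strictAnti_of_deriv_le_sq_sub_one (hv' : ∀ t, deriv v t ≤ v t ^ 2 - 1)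
    (hbound : ∀ t, -1 < v t ∧ v t < 1) : StrictAnti v :=
  strictAnti_of_deriv_neg fun t => by nlinarith [hv' t, hbound t]

lemma tendsto_atBot_of_deriv_le_sq_sub_one (hv : Differentiable ℝ v)
    (hv' : ∀ t, deriv v t ≤ v t ^ 2 - 1) (hbound : ∀ t, -1 < v t ∧ v t < 1) :
    Tendsto v atBot (nhds 1) := by
  have hanti := (strictAnti_of_deriv_le_sq_sub_one hv' hbound).antitone
  have hbdd : BddAbove (range v) := ⟨1, forall_mem_range.2 fun t => (hbound t).2.le⟩
  have hlim := tendsto_atBot_ciSup hanti hbdd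
  set L := ⨆ t, v t
  suffices L = 1 by rwa [← this]
  refine (ciSup_le fun t => (hbound t).2.le).antisymm (not_lt.1 fun hL => ?_)
  set b := max (-v 0) L
  have hb : b < 1 := max_lt (by linarith [(hbound 0).1]) hL
  have hv_mem : ∀ t ≤ 0, -b ≤ v t ∧ v t ≤ b := fun t ht =>
    ⟨by linarith [le_max_left (-v 0) L, hanti ht], (le_ciSup hbdd t).trans (le_max_right _ _)⟩
  have hb_nonneg : 0 ≤ b := by linarith [hv_mem 0 le_rfl]
  have hslope : ∀ t ≤ 0, deriv v t ≤ -(1 - b ^ 2) := fun t ht => by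
    linarith [hv' t, sq_le_sq' (hv_mem t ht).1 (hv_mem t ht).2]
  have hε : 0 < 1 - b ^ 2 := by nlinarith
  exact not_tendsto_atTop_of_tendsto_nhds hlim
    (tendsto_atBot_atTop_of_deriv_le_neg hv hε hslope)

lemma deriv_neg_comp_neg (t : ℝ) : deriv (fun s => -v (-s)) t = deriv v (-t) := by
  rw [deriv.fun_neg, deriv_comp_neg, neg_neg]

end SubRiccati

/-- If `v : ℝ → ℝ` is differentiable with `v' ≤ v² - 1` and `-1 < v < 1`
everywhere, then `v` is strictly decreasing, `v(t) → 1` as `t → -∞`, and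
`v(t) → -1` as `t → +∞`. -/
theorem stmt_1 (v : ℝ → ℝ) (hv : Differentiable ℝ v)
    (hv' : ∀ t, deriv v t ≤ (v t) ^ 2 - 1)
    (hbound : ∀ t, -1 < v t ∧ v t < 1) :
    StrictAnti v ∧ Filter.Tendsto v Filter.atBot (nhds 1) ∧
      Filter.Tendsto v Filter.atTop (nhds (-1)) := by
  refine ⟨strictAnti_of_deriv_le_sq_sub_one hv' hbound,
    tendsto_atBot_of_deriv_le_sq_sub_one hv hv' hbound, ?_⟩
  have hw : Tendsto (fun s => -v (-s)) atBot (nhds 1) := by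
    refine tendsto_atBot_of_deriv_le_sq_sub_one (hv.comp differentiable_neg).neg
      (fun t => ?_) (fun t => ?_)
    · rw [deriv_neg_comp_neg]
      linarith [hv' (-t), neg_sq (v (-t))]
    · constructor <;> linarith [hbound (-t)]
  simpa using (hw.comp tendsto_neg_atTop_atBot).neg
end

section
/- Let u, v be harmonic functions on a Riemannian manifold M³ and e a unit vector field such that e(v) = v² − u² − 1 and e(u) = 2uv pointwise. Then the function w = u² + v² − 1 satisfies Δw ≥ 2w² pointwise. -/
/-!
Since `u` and `v` are harmonic, `Δw = 2‖∇u‖² + 2‖∇v‖²`. Projecting the gradients on the unit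
field `e` gives `Δw ≥ 2 e(u)² + 2 e(v)² = 2 (2uv)² + 2 (v² - u² - 1)²`, and this equals
`2 w² + 8 u² ≥ 2 w²`.
-/

open RealInnerProductSpace

theorem sq_inner_le_sq_norm_of_norm_eq_one {E : Type*} [NormedAddCommGroup E]
    [InnerProductSpace ℝ E] (g : E) {e : E} (he : ‖e‖ = 1) : ⟪g, e⟫ ^ 2 ≤ ‖g‖ ^ 2 := by
  simpa [he] using pow_le_pow_left₀ (abs_nonneg _) (abs_real_inner_le_norm g e) 2

/-- Pointwise Bochner-type estimate: let `u, v` be harmonic functions on a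
Riemannian manifold `M` (gradients `gradu, gradv` with values in the tangent
spaces, modelled by an inner product space `E`, Laplacians `lapu = lapv = 0`),
and let `e` be a unit vector field with `e(v) = v² - u² - 1` and `e(u) = 2uv`.
Then `w = u² + v² - 1` satisfies `Δw ≥ 2w²`, where
`Δw = 2u·Δu + 2‖∇u‖² + 2v·Δv + 2‖∇v‖²`. -/
theorem stmt_8 {M : Type*} {E : Type*} [NormedAddCommGroup E] [InnerProductSpace ℝ E]
    (u v : M → ℝ) (gradu gradv : M → E) (e : M → E)
    (lapu lapv lapw : M → ℝ)
    (he : ∀ x, ‖e x‖ = 1)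
    (hharmu : ∀ x, lapu x = 0) (hharmv : ∀ x, lapv x = 0)
    (hev : ∀ x, (inner ℝ (gradv x) (e x) : ℝ) = (v x) ^ 2 - (u x) ^ 2 - 1)
    (heu : ∀ x, (inner ℝ (gradu x) (e x) : ℝ) = 2 * u x * v x)
    (hlapw : ∀ x, lapw x =
      2 * u x * lapu x + 2 * ‖gradu x‖ ^ 2 + 2 * v x * lapv x + 2 * ‖gradv x‖ ^ 2) :
    ∀ x, lapw x ≥ 2 * ((u x) ^ 2 + (v x) ^ 2 - 1) ^ 2 := by
  intro x
  have hu : (2 * u x * v x) ^ 2 ≤ ‖gradu x‖ ^ 2 :=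
    heu x ▸ sq_inner_le_sq_norm_of_norm_eq_one (gradu x) (he x)
  have hv : ((v x) ^ 2 - (u x) ^ 2 - 1) ^ 2 ≤ ‖gradv x‖ ^ 2 :=
    hev x ▸ sq_inner_le_sq_norm_of_norm_eq_one (gradv x) (he x)
  have hsum : (2 * u x * v x) ^ 2 + ((v x) ^ 2 - (u x) ^ 2 - 1) ^ 2
      = ((u x) ^ 2 + (v x) ^ 2 - 1) ^ 2 + 4 * (u x) ^ 2 := by
    ring
  rw [hlapw x, hharmu x, hharmv x]
  linarith [sq_nonneg (u x)]
end

section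
/- Let A, C, J be endomorphisms of a 2-dimensional real inner product space with A symmetric, J the rotation by π/2 (orthogonal almost complex structure), such that A∘C = Cᵗ∘A and A∘J = Jᵗ∘A. If the pair {A, A'} for symmetric A' satisfying the same relations spans a 2-dimensional space of symmetric traceless operators, then C ∈ span{I, J}. -/
/-!
Testing `A ∘ C = Cᵗ ∘ A` against the symmetric traceless operator `A = u ⊗ u - w ⊗ w`, for
orthogonal `u, w` of equal length, gives `⟪w, C u⟫ + ⟪u, C w⟫ = 0`: the symmetric part of `C`
is conformal. For a unit vector `e` and `f = J e`, the pairs `(e, f)` and `(e + f, e - f)` then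
force the matrix of `C` in the orthonormal basis `(e, f)` to be `[[a, -b], [b, a]]`, which is
the matrix of `a • 1 + b • J`.
-/

open LinearMap
open scoped InnerProductSpace

section

open InnerProductSpace

variable {V : Type*} [NormedAddCommGroup V] [InnerProductSpace ℝ V]

theorem isSymmetric_rankOne_sub_rankOne (u w : V) :
    ((rankOne ℝ u u).toLinearMap - (rankOne ℝ w w).toLinearMap).IsSymmetric :=
  (isSymmetric_rankOne_self u).sub (isSymmetric_rankOne_self w)

theorem trace_rankOne_sub_rankOne [FiniteDimensional ℝ V] (u w : V) :
    trace ℝ V ((rankOne ℝ u u).toLinearMap - (rankOne ℝ w w).toLinearMap) =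
      ⟪u, u⟫_ℝ - ⟪w, w⟫_ℝ := by
  simp [toLinearMap_rankOne]

section Intertwining

variable [FiniteDimensional ℝ V] {C : V →ₗ[ℝ] V}
  (hC : ∀ A : V →ₗ[ℝ] V, A.IsSymmetric → trace ℝ V A = 0 →
    ∀ x y : V, ⟪A (C x), y⟫_ℝ = ⟪A x, C y⟫_ℝ)
include hC

theorem inner_add_inner_eq_zero_of_inner_eq_zero {u w : V} (huw : ⟪u, w⟫_ℝ = 0)
    (hnorm : ⟪u, u⟫_ℝ = ⟪w, w⟫_ℝ) :
    ⟪w, C u⟫_ℝ + ⟪u, C w⟫_ℝ = 0 := by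
  set A := (rankOne ℝ u u).toLinearMap - (rankOne ℝ w w).toLinearMap
  have hA := isSymmetric_rankOne_sub_rankOne u w
  have key := hC A hA (by rw [trace_rankOne_sub_rankOne, hnorm, sub_self]) u w
  rw [hA] at key
  simp only [A, LinearMap.sub_apply, ContinuousLinearMap.coe_coe, rankOne_apply, inner_sub_left,
    inner_sub_right, real_inner_smul_left, real_inner_smul_right, huw, real_inner_comm u w] at key
  have : ⟪u, u⟫_ℝ * (⟪w, C u⟫_ℝ + ⟪u, C w⟫_ℝ) = 0 := by
    rw [real_inner_comm (C u) w]
    linear_combination -key + ⟪C u, w⟫_ℝ * hnorm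
  rcases mul_eq_zero.mp this with hu | h
  · have hw : w = 0 := inner_self_eq_zero.mp (hnorm ▸ hu)
    simp [inner_self_eq_zero.mp hu, hw]
  · exact h

theorem inner_apply_eq_of_orthogonal {e f : V} (hef : ⟪e, f⟫_ℝ = 0)
    (hnorm : ⟪e, e⟫_ℝ = ⟪f, f⟫_ℝ) :
    ⟪e, C f⟫_ℝ = -⟪f, C e⟫_ℝ ∧ ⟪f, C f⟫_ℝ = ⟪e, C e⟫_ℝ := by
  have hfe : ⟪f, e⟫_ℝ = 0 := by rw [real_inner_comm, hef]
  have h₁ := inner_add_inner_eq_zero_of_inner_eq_zero hC hef hnorm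
  have h₂ := inner_add_inner_eq_zero_of_inner_eq_zero hC (u := e + f) (w := e - f)
    (by simp only [inner_add_left, inner_sub_right, hef, hfe, hnorm]; ring)
    (by simp only [inner_add_left, inner_add_right, inner_sub_left, inner_sub_right, hef, hfe]
        ring)
  simp only [map_add, map_sub, inner_add_left, inner_add_right, inner_sub_left,
    inner_sub_right] at h₂
  constructor <;> linarith

end Intertwining

section ComplexStructure

variable {J : V →ₗ[ℝ] V}

theorem norm_map_of_inner_map_map (hJorth : ∀ x y : V, ⟪J x, J y⟫_ℝ = ⟪x, y⟫_ℝ) (x : V) :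
    ‖J x‖ = ‖x‖ := by
  rw [norm_eq_sqrt_real_inner, norm_eq_sqrt_real_inner, hJorth]

theorem apply_apply_of_comp_self_eq_neg_id (hJ2 : J ∘ₗ J = -LinearMap.id) (x : V) :
    J (J x) = -x := by
  simpa using LinearMap.congr_fun hJ2 x

variable (hJ2 : J ∘ₗ J = -LinearMap.id) (hJorth : ∀ x y : V, ⟪J x, J y⟫_ℝ = ⟪x, y⟫_ℝ)
include hJ2 hJorth

theorem inner_self_apply_eq_zero (x : V) : ⟪x, J x⟫_ℝ = 0 := by
  have h := hJorth x (J x)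
  rw [apply_apply_of_comp_self_eq_neg_id hJ2, inner_neg_right, real_inner_comm] at h
  linarith

theorem orthonormal_vecCons_self_apply {e : V} (he : ‖e‖ = 1) : Orthonormal ℝ ![e, J e] := by
  rw [orthonormal_iff_ite]
  intro i j
  fin_cases i <;> fin_cases j <;>
    simp [inner_self_apply_eq_zero hJ2 hJorth, real_inner_comm e, he,
      norm_map_of_inner_map_map hJorth]

end ComplexStructure

end

/-- Linear-algebra content of Lemma 1: let `V` be a 2-dimensional real inner
product space, `J` an orthogonal almost complex structure (rotation by `π/2`,
i.e. `J² = -I` and `J` preserves the inner product).  If `C : V → V` is linear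
and satisfies `A ∘ C = Cᵗ ∘ A` (i.e. `⟨A(Cx), y⟩ = ⟨Ax, Cy⟩` for all `x, y`)
for every symmetric traceless endomorphism `A` of `V`, then
`C = v·I - u·J` for some reals `u, v`. -/
theorem stmt_15 {V : Type*} [NormedAddCommGroup V] [InnerProductSpace ℝ V]
    [FiniteDimensional ℝ V] (hdim : Module.finrank ℝ V = 2)
    (J : V →ₗ[ℝ] V) (hJ2 : J ∘ₗ J = -LinearMap.id)
    (hJorth : ∀ x y : V, (inner ℝ (J x) (J y) : ℝ) = inner ℝ x y)
    (C : V →ₗ[ℝ] V)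
    (hC : ∀ A : V →ₗ[ℝ] V, (∀ x y : V, (inner ℝ (A x) y : ℝ) = inner ℝ x (A y)) →
      LinearMap.trace ℝ V A = 0 →
      ∀ x y : V, (inner ℝ (A (C x)) y : ℝ) = inner ℝ (A x) (C y)) :
    ∃ u v : ℝ, C = v • LinearMap.id - u • J := by
  have : Nontrivial V := Module.nontrivial_of_finrank_eq_succ hdim
  obtain ⟨e, he⟩ := exists_norm_eq V zero_le_one
  have hperp : ⟪e, J e⟫_ℝ = 0 := inner_self_apply_eq_zero hJ2 hJorth e
  obtain ⟨hCJe₁, hCJe₂⟩ := inner_apply_eq_of_orthogonal hC hperp (hJorth e e).symm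
  let B := basisOfOrthonormalOfCardEqFinrank (orthonormal_vecCons_self_apply hJ2 hJorth he)
    (by simp [hdim])
  refine ⟨-⟪J e, C e⟫_ℝ, ⟪e, C e⟫_ℝ,
    B.ext fun i ↦ InnerProductSpace.ext_inner_left_basis B fun j ↦ ?_⟩
  fin_cases i <;> fin_cases j <;>
    simp [B, apply_apply_of_comp_self_eq_neg_id hJ2, inner_add_right, real_inner_smul_right, he,
      norm_map_of_inner_map_map hJorth, hperp, real_inner_comm e (J e), hCJe₁, hCJe₂]
end
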